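/- Substitution Principle: for all formulas φ, ψ, χ of S5BKE and every propositional variable x, the scheme (φ≡ψ) → (χ[x:=φ] ≡ χ[x:=ψ]) is a theorem of S5BKE, where χ[x:=φ] is the result of substituting φ for every occurrence of x in χ and φ≡ψ abbreviates □(φ↔ψ). -/
import Mathlib


/-- Formulas of S5BKE over variables `x_n`, with primitive `¬`, `→`, `□`, `K`, `B`. -/
inductive Fm : Type
  | var : ℕ → Fm
  | neg : Fm → Fm
  | imp : Fm → Fm → Fm
  | box : Fm → Fm
  | K : Fm → Fm
  | B : Fm → Fm
  deriving DecidableEq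

/-- `⊤` defined as usual. -/
def fmTop : Fm := Fm.imp (Fm.var 0) (Fm.var 0)
/-- `⊥` defined as usual. -/
def fmBot : Fm := Fm.neg fmTop
/-- Conjunction, defined from `¬, →`. -/
def fmAnd (φ ψ : Fm) : Fm := Fm.neg (Fm.imp φ (Fm.neg ψ))
/-- Biconditional, defined as usual. -/
def fmIff (φ ψ : Fm) : Fm := fmAnd (Fm.imp φ ψ) (Fm.imp ψ φ)
/-- Propositional identity `φ ≡ ψ := □(φ ↔ ψ)`. -/
def fmEquiv (φ ψ : Fm) : Fm := Fm.box (fmIff φ ψ)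

/-- Boolean evaluation treating variables and modal formulas as atoms. -/
def evalB (v : Fm → Bool) : Fm → Bool
  | Fm.neg φ => !evalB v φ
  | Fm.imp φ ψ => !evalB v φ || evalB v ψ
  | φ => v φ

/-- `φ` has the form of a classical tautology. -/
def IsTaut (φ : Fm) : Prop := ∀ v : Fm → Bool, evalB v φ = true

/-- The axioms of S5BKE. -/
inductive Ax : Fm → Prop
  | taut {φ} : IsTaut φ → Ax φ
  | kRefl (φ) : Ax (Fm.imp (Fm.K φ) φ)
  | kB (φ) : Ax (Fm.imp (Fm.K φ) (Fm.B φ))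
  | box4 (φ) : Ax (Fm.imp (Fm.box φ) (Fm.box (Fm.box φ)))
  | box5 (φ) : Ax (Fm.imp (Fm.neg (Fm.box φ)) (Fm.box (Fm.neg (Fm.box φ))))
  | boxK (φ) : Ax (Fm.imp (Fm.box φ) (Fm.K φ))
  | kDist (φ ψ) : Ax (Fm.imp (Fm.K (Fm.imp φ ψ)) (Fm.imp (Fm.K φ) (Fm.K ψ)))
  | bDist (φ ψ) : Ax (Fm.imp (Fm.B (Fm.imp φ ψ)) (Fm.imp (Fm.B φ) (Fm.B ψ)))
  | boxDist (φ ψ) : Ax (Fm.imp (Fm.box (Fm.imp φ ψ)) (Fm.imp (Fm.box φ) (Fm.box ψ)))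
  | consB : Ax (Fm.neg (Fm.B fmBot))

/-- Derivability in S5BKE: hypotheses, axioms, modus ponens, axiom necessitation. -/
inductive Deriv (Φ : Set Fm) : Fm → Prop
  | hyp {φ} : φ ∈ Φ → Deriv Φ φ
  | ax {φ} : Ax φ → Deriv Φ φ
  | mp {φ ψ} : Deriv Φ (Fm.imp φ ψ) → Deriv Φ φ → Deriv Φ ψ
  | nec {φ} : Ax φ → Deriv Φ (Fm.box φ)

def Consistent (Φ : Set Fm) : Prop := ¬ Deriv Φ fmBot

def MaxConsistent (Γ : Set Fm) : Prop :=
  Consistent Γ ∧ ∀ Δ : Set Fm, Γ ⊂ Δ → ¬ Consistent Δ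

/-- Substitution of `θ` for every occurrence of variable `x`. -/
def subst (x : ℕ) (θ : Fm) : Fm → Fm
  | Fm.var n => if n = x then θ else Fm.var n
  | Fm.neg φ => Fm.neg (subst x θ φ)
  | Fm.imp φ ψ => Fm.imp (subst x θ φ) (subst x θ ψ)
  | Fm.box φ => Fm.box (subst x θ φ)
  | Fm.K φ => Fm.K (subst x θ φ)
  | Fm.B φ => Fm.B (subst x θ φ)


section SubstHelpers

private lemma evalB_neg (v : Fm → Bool) (φ : Fm) : evalB v (Fm.neg φ) = !evalB v φ := rfl
private lemma evalB_imp (v : Fm → Bool) (φ ψ : Fm) :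
    evalB v (Fm.imp φ ψ) = (!evalB v φ || evalB v ψ) := rfl

private lemma tautT {φ : Fm} (h : IsTaut φ) : Deriv ∅ φ := Deriv.ax (Ax.taut h)

private lemma necT {φ : Fm} (h : Deriv ∅ φ) : Deriv ∅ (Fm.box φ) := by
  induction h with
  | hyp h => exact absurd h (Set.notMem_empty _)
  | ax h => exact Deriv.nec h
  | mp _ _ ih1 ih2 => exact Deriv.mp (Deriv.mp (Deriv.ax (Ax.boxDist _ _)) ih1) ih2
  | nec h => exact Deriv.mp (Deriv.ax (Ax.box4 _)) (Deriv.nec h)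

private lemma syllT {a b c : Fm} (h1 : Deriv ∅ (Fm.imp a b)) (h2 : Deriv ∅ (Fm.imp b c)) :
    Deriv ∅ (Fm.imp a c) := by
  refine Deriv.mp (Deriv.mp (tautT ?_) h1) h2
  intro v
  simp only [evalB_neg, evalB_imp]
  cases evalB v a <;> cases evalB v b <;> cases evalB v c <;> rfl

/-- `⊢ □(s↔t) → (s ↔ t)` style: box to iff via K. -/
private lemma boxElimT (s : Fm) : Deriv ∅ (Fm.imp (Fm.box s) s) :=
  syllT (Deriv.ax (Ax.boxK s)) (Deriv.ax (Ax.kRefl s))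

private lemma iffElim1 (s t : Fm) : IsTaut (Fm.imp (fmIff s t) (Fm.imp s t)) := by
  intro v
  simp only [fmIff, fmAnd, evalB_neg, evalB_imp]
  cases evalB v s <;> cases evalB v t <;> rfl

private lemma iffElim2 (s t : Fm) : IsTaut (Fm.imp (fmIff s t) (Fm.imp t s)) := by
  intro v
  simp only [fmIff, fmAnd, evalB_neg, evalB_imp]
  cases evalB v s <;> cases evalB v t <;> rfl

/-- combine `a → (p→q)` and `a → (q→p)` into `a → (p ↔ q)` -/
private lemma iffIntroT {a p q : Fm} (h1 : Deriv ∅ (Fm.imp a (Fm.imp p q)))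
    (h2 : Deriv ∅ (Fm.imp a (Fm.imp q p))) : Deriv ∅ (Fm.imp a (fmIff p q)) := by
  refine Deriv.mp (Deriv.mp (tautT ?_) h1) h2
  intro v
  simp only [fmIff, fmAnd, evalB_neg, evalB_imp]
  cases evalB v a <;> cases evalB v p <;> cases evalB v q <;> rfl

/-- `⊢ □(s↔t) → □(s→t)` -/
private lemma boxIffImp1 (s t : Fm) :
    Deriv ∅ (Fm.imp (Fm.box (fmIff s t)) (Fm.box (Fm.imp s t))) :=
  Deriv.mp (Deriv.ax (Ax.boxDist _ _)) (Deriv.nec (Ax.taut (iffElim1 s t)))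

private lemma boxIffImp2 (s t : Fm) :
    Deriv ∅ (Fm.imp (Fm.box (fmIff s t)) (Fm.box (Fm.imp t s))) :=
  Deriv.mp (Deriv.ax (Ax.boxDist _ _)) (Deriv.nec (Ax.taut (iffElim2 s t)))

/-- `⊢ □(s↔t) → (□s ↔ □t)` -/
private lemma boxCongr (s t : Fm) :
    Deriv ∅ (Fm.imp (Fm.box (fmIff s t)) (fmIff (Fm.box s) (Fm.box t))) :=
  iffIntroT (syllT (boxIffImp1 s t) (Deriv.ax (Ax.boxDist s t)))
            (syllT (boxIffImp2 s t) (Deriv.ax (Ax.boxDist t s)))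

/-- `⊢ □(s↔t) → (Ks ↔ Kt)` -/
private lemma kCongr (s t : Fm) :
    Deriv ∅ (Fm.imp (Fm.box (fmIff s t)) (fmIff (Fm.K s) (Fm.K t))) :=
  iffIntroT
    (syllT (syllT (boxIffImp1 s t) (Deriv.ax (Ax.boxK _))) (Deriv.ax (Ax.kDist s t)))
    (syllT (syllT (boxIffImp2 s t) (Deriv.ax (Ax.boxK _))) (Deriv.ax (Ax.kDist t s)))

/-- `⊢ □(s↔t) → (Bs ↔ Bt)` -/
private lemma bCongr (s t : Fm) :
    Deriv ∅ (Fm.imp (Fm.box (fmIff s t)) (fmIff (Fm.B s) (Fm.B t))) :=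
  iffIntroT
    (syllT (syllT (syllT (boxIffImp1 s t) (Deriv.ax (Ax.boxK _))) (Deriv.ax (Ax.kB _)))
      (Deriv.ax (Ax.bDist s t)))
    (syllT (syllT (syllT (boxIffImp2 s t) (Deriv.ax (Ax.boxK _))) (Deriv.ax (Ax.kB _)))
      (Deriv.ax (Ax.bDist t s)))

/-- from `⊢ a → c` where `a = □e`, get `⊢ a → □c`. -/
private lemma boxUp {e c : Fm} (h : Deriv ∅ (Fm.imp (Fm.box e) c)) :
    Deriv ∅ (Fm.imp (Fm.box e) (Fm.box c)) :=
  syllT (Deriv.ax (Ax.box4 e)) (Deriv.mp (Deriv.ax (Ax.boxDist _ _)) (necT h))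

/-- congruence for neg at the `a → (· ↔ ·)` level. -/
private lemma negCongrT {a s s' : Fm} (h : Deriv ∅ (Fm.imp a (fmIff s s'))) :
    Deriv ∅ (Fm.imp a (fmIff (Fm.neg s) (Fm.neg s'))) := by
  refine Deriv.mp (tautT ?_) h
  intro v
  simp only [fmIff, fmAnd, evalB_neg, evalB_imp]
  cases evalB v a <;> cases evalB v s <;> cases evalB v s' <;> rfl

private lemma impCongrT {a s s' t t' : Fm} (h1 : Deriv ∅ (Fm.imp a (fmIff s s')))
    (h2 : Deriv ∅ (Fm.imp a (fmIff t t'))) :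
    Deriv ∅ (Fm.imp a (fmIff (Fm.imp s t) (Fm.imp s' t'))) := by
  refine Deriv.mp (Deriv.mp (tautT ?_) h1) h2
  intro v
  simp only [fmIff, fmAnd, evalB_neg, evalB_imp]
  cases evalB v a <;> cases evalB v s <;> cases evalB v s' <;>
    cases evalB v t <;> cases evalB v t' <;> rfl

private lemma iffReflT (a s : Fm) : Deriv ∅ (Fm.imp a (fmIff s s)) := by
  refine tautT ?_
  intro v
  simp only [fmIff, fmAnd, evalB_neg, evalB_imp]
  cases evalB v a <;> cases evalB v s <;> rfl

/-- Main induction: `⊢ □(φ↔ψ) → (χ[φ] ↔ χ[ψ])`. -/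
private lemma substIff (φ ψ : Fm) (x : ℕ) : ∀ χ : Fm,
    Deriv ∅ (Fm.imp (Fm.box (fmIff φ ψ)) (fmIff (subst x φ χ) (subst x ψ χ))) := by
  intro χ
  induction χ with
  | var n =>
    by_cases h : n = x
    · simp only [subst, if_pos h]
      exact boxElimT (fmIff φ ψ)
    · simp only [subst, if_neg h]
      exact iffReflT _ _
  | neg σ ih => exact negCongrT ih
  | imp σ τ ih1 ih2 => exact impCongrT ih1 ih2
  | box σ ih => exact syllT (boxUp ih) (boxCongr _ _)
  | K σ ih => exact syllT (boxUp ih) (kCongr _ _)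
  | B σ ih => exact syllT (boxUp ih) (bCongr _ _)

end SubstHelpers

/-- the Substitution Principle `(φ≡ψ) → (χ[x:=φ] ≡ χ[x:=ψ])` is a theorem. -/
theorem substitution_principle (φ ψ χ : Fm) (x : ℕ) :
    Deriv ∅ (Fm.imp (fmEquiv φ ψ) (fmEquiv (subst x φ χ) (subst x ψ χ))) := by
  exact boxUp (substIff φ ψ x χ)
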